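/- Let M > 0 and let r₀ ∈ (0,1) satisfy r₀ − 1 + 2M(2M+1)(r₀ + (1−r₀)ln(1−r₀)) − 2M(1 − 2 ln 2) = 0. Then for the function f_M(z) = z + 2M Σ_{n=2}^∞ zⁿ/(n(n−1)) (whose coefficients are a_n = 2M/(n(n−1)), b_n = 0), equality holds: r₀ + Σ_{n=2}^∞ (2M/(n(n−1)) + n(n−1)(2M/(n(n−1)))²) r₀ⁿ = 1 + 2M(1 − 2 ln 2) = d(f_M(0), ∂f_M(𝔻)). -/

import Mathlib

/-!
Summing the series, `f_M z = (1 + 2M) z + 2M (1 - z) log (1 - z)`, so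
`f_M' z = 1 - 2M log (1 - z)` and `f_M z = z ∫₀¹ f_M' (t z) dt`. Since
`Re log (1 - t z) = log |1 - t z| ≤ log (1 + t |z|)`, this gives `|f_M z| ≥ -f_M (-|z|)`:
on every circle `|f_M|` is smallest at the negative real point. Hence the liminf as `|z| → 1`
is `-f_M (-1) = 1 + 2M (1 - 2 log 2)`, as long as this is nonnegative. The equation defining
`r₀` says that this number equals the coefficient sum
`r₀ + 2M (2M + 1) (r₀ + (1 - r₀) log (1 - r₀))`, which is positive.
-/

open Filter MeasureTheory

/-- Euclidean distance from `f 0` to the boundary of `f(𝔻)`, defined as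
`liminf_{|z| → 1⁻} |f z - f 0|`. -/
noncomputable def bdyDist (f : ℂ → ℂ) : ℝ :=
  Filter.liminf (fun z : ℂ => ‖f z - f 0‖)
    (Filter.comap (fun z : ℂ => ‖z‖) (nhdsWithin 1 (Set.Iio 1)))

/-- `f = h + conj g` belongs to the class `P⁰_H(M)`:  `h z = z + ∑_{n≥2} a n * z^n`,
`g z = ∑_{n≥2} b n * z^n` on the unit disk, and `Re (z h''(z)) > -M + |z g''(z)|` there. -/
def PH0 (M : ℝ) (a b : ℕ → ℂ) (h g : ℂ → ℂ) : Prop :=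
  (∀ z ∈ Metric.ball (0 : ℂ) 1,
      HasSum (fun n : ℕ => a (n + 2) * z ^ (n + 2)) (h z - z)) ∧
  (∀ z ∈ Metric.ball (0 : ℂ) 1,
      HasSum (fun n : ℕ => b (n + 2) * z ^ (n + 2)) (g z)) ∧
  (∀ z ∈ Metric.ball (0 : ℂ) 1,
      -M + ‖z * deriv (deriv g) z‖ < (z * deriv (deriv h) z).re)

/-- The extremal function `f_M z = z + 2M ∑_{n≥2} z^n/(n(n-1))`. -/
noncomputable def fM (M : ℝ) : ℂ → ℂ :=
  fun z => z + 2 * (M : ℂ) * ∑' n : ℕ, z ^ (n + 2) / (((n : ℂ) + 2) * ((n : ℂ) + 1))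

open Topology

lemma Complex.hasSum_one_sub_mul_log_one_sub {z : ℂ} (hz : ‖z‖ < 1) :
    HasSum (fun n : ℕ => z ^ (n + 2) / (((n : ℂ) + 2) * ((n : ℂ) + 1)))
      (z + (1 - z) * Complex.log (1 - z)) := by
  have h₁ := Complex.hasSum_taylorSeries_neg_log' hz
  have h₂ : HasSum (fun n : ℕ => z ^ (n + 2) / ((n : ℂ) + 2)) (-Complex.log (1 - z) - z) := by
    have h := (hasSum_nat_add_iff' 1).mpr h₁
    norm_num [add_assoc] at h
    exact h
  have hsplit : (fun n : ℕ => z ^ (n + 2) / (((n : ℂ) + 2) * ((n : ℂ) + 1)))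
      = fun n : ℕ => z * (z ^ (n + 1) / ((n : ℂ) + 1)) - z ^ (n + 2) / ((n : ℂ) + 2) := by
    funext n
    have : (n : ℂ) + 1 ≠ 0 := Nat.cast_add_one_ne_zero n
    have : (n : ℂ) + 2 ≠ 0 := by norm_cast
    field_simp
    ring
  rw [hsplit, show z + (1 - z) * Complex.log (1 - z)
    = z * -Complex.log (1 - z) - (-Complex.log (1 - z) - z) by ring]
  exact (h₁.mul_left z).sub h₂

lemma Real.hasSum_one_sub_mul_log_one_sub {x : ℝ} (hx : |x| < 1) :
    HasSum (fun n : ℕ => x ^ (n + 2) / (((n : ℝ) + 2) * ((n : ℝ) + 1)))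
      (x + (1 - x) * Real.log (1 - x)) := by
  have hlog : (Real.log (1 - x) : ℂ) = Complex.log (1 - x) := by
    rw [Complex.ofReal_log (by linarith [abs_lt.mp hx]), Complex.ofReal_sub, Complex.ofReal_one]
  rw [← Complex.hasSum_ofReal]
  push_cast
  rw [hlog]
  exact Complex.hasSum_one_sub_mul_log_one_sub (by simpa using hx)

lemma Complex.one_sub_mem_slitPlane_of_norm_lt_one {z : ℂ} (hz : ‖z‖ < 1) :
    1 - z ∈ Complex.slitPlane := by
  simpa [sub_eq_add_neg] using Complex.mem_slitPlane_of_norm_lt_one (z := -z) (by simpa)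

lemma norm_ofReal_mul_lt_one {z : ℂ} (hz : ‖z‖ < 1) {t : ℝ}
    (ht : t ∈ Set.Icc (0 : ℝ) 1) : ‖(t : ℂ) * z‖ < 1 := by
  rw [norm_mul, Complex.norm_real, Real.norm_of_nonneg ht.1]
  nlinarith [norm_nonneg z, ht.2]

lemma norm_one_sub_ofReal_mul_le {t : ℝ} (ht : 0 ≤ t) (z : ℂ) :
    ‖1 - t * z‖ ≤ ‖1 - t * -(‖z‖ : ℂ)‖ := by
  have hreal : (1 : ℂ) - t * -(‖z‖ : ℂ) = ((1 + t * ‖z‖ : ℝ) : ℂ) := by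
    push_cast; ring
  calc ‖1 - t * z‖ ≤ ‖(1 : ℂ)‖ + ‖(t : ℂ) * z‖ := norm_sub_le _ _
    _ = ‖1 - t * -(‖z‖ : ℂ)‖ := by
      rw [hreal, Complex.norm_real, norm_mul, Complex.norm_real, Real.norm_of_nonneg ht,
        Real.norm_of_nonneg (by positivity), norm_one]

lemma sub_eq_mul_integral_deriv_segment {f f' : ℂ → ℂ} {z : ℂ}
    (hf : ∀ t ∈ Set.Icc (0 : ℝ) 1, HasDerivAt f (f' (t * z)) (t * z))
    (hf' : ContinuousOn (fun t : ℝ => f' (t * z)) (Set.Icc 0 1)) :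
    f z - f 0 = z * ∫ t in (0 : ℝ)..1, f' (t * z) := by
  have hF : ∀ t ∈ Set.uIcc (0 : ℝ) 1,
      HasDerivAt (fun t : ℝ => f (t * z)) (z * f' (t * z)) t := by
    intro t ht
    rw [Set.uIcc_of_le zero_le_one] at ht
    have := ((hf t ht).comp (t : ℂ) ((hasDerivAt_id (t : ℂ)).mul_const z)).comp_ofReal
    simpa [mul_comm] using this
  rw [← intervalIntegral.integral_const_mul, intervalIntegral.integral_eq_sub_of_hasDerivAt hF]
  · simp
  · exact (hf'.const_smul z).intervalIntegrable_of_Icc zero_le_one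

lemma liminf_eq_of_eventually_ge_of_tendsto_comp {α β : Type*} {l : Filter α} {l' : Filter β}
    [NeBot l'] {u v : α → ℝ} {φ : β → α} {d : ℝ} (hvu : ∀ᶠ x in l, v x ≤ u x)
    (hv : Tendsto v l (𝓝 d)) (hφ : Tendsto φ l' l) (huφ : Tendsto (u ∘ φ) l' (𝓝 d)) :
    liminf u l = d := by
  have hu_freq : ∀ c, d < c → ∃ᶠ x in l, u x ≤ c := fun c hc =>
    hφ.frequently ((huφ.eventually (gt_mem_nhds hc)).frequently.mono fun _ => le_of_lt)
  have hu_ev : ∀ c, c < d → ∀ᶠ x in l, c ≤ u x := fun c hc =>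
    ((hv.eventually (lt_mem_nhds hc)).and hvu).mono fun _ h => h.1.le.trans h.2
  apply le_antisymm
  · refine le_of_forall_gt_imp_ge_of_dense fun c hc =>
      liminf_le_of_frequently_le (hu_freq c hc) ?_
    exact isBoundedUnder_of_eventually_ge (hu_ev (d - 1) (by linarith))
  · refine le_of_forall_lt_imp_le_of_dense fun c hc => le_liminf_of_le ?_ (hu_ev c hc)
    exact IsCoboundedUnder.of_frequently_le (hu_freq (d + 1) (by linarith))

section ExtremalFunction

variable {M : ℝ} {z : ℂ}

lemma fM_eq (hz : ‖z‖ < 1) :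
    fM M z = (1 + 2 * M) * z + 2 * M * ((1 - z) * Complex.log (1 - z)) := by
  rw [fM, (Complex.hasSum_one_sub_mul_log_one_sub hz).tsum_eq]
  ring

lemma fM_zero : fM M 0 = 0 := by
  simp [fM]

lemma hasDerivAt_fM (hz : ‖z‖ < 1) :
    HasDerivAt (fM M) (1 - 2 * M * Complex.log (1 - z)) z := by
  have hslit := Complex.one_sub_mem_slitPlane_of_norm_lt_one hz
  have hsub := (hasDerivAt_id' z).const_sub 1
  have hclosed := ((hasDerivAt_id' z).const_mul (1 + 2 * (M : ℂ))).add
    ((hsub.mul (hsub.clog hslit)).const_mul (2 * (M : ℂ)))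
  have heq : (fun w => (1 + 2 * (M : ℂ)) * w + 2 * M * ((1 - w) * Complex.log (1 - w)))
      =ᶠ[𝓝 z] fM M := by
    filter_upwards [Metric.isOpen_ball.mem_nhds (mem_ball_zero_iff.mpr hz)] with w hw
    exact (fM_eq (mem_ball_zero_iff.mp hw)).symm
  refine (hclosed.congr_of_eventuallyEq heq.symm).congr_deriv ?_
  have := Complex.slitPlane_ne_zero hslit
  field_simp
  ring

variable (M) in
lemma continuousOn_one_sub_mul_log_one_sub_ofReal_mul (hz : ‖z‖ < 1) :
    ContinuousOn (fun t : ℝ => 1 - 2 * M * Complex.log (1 - t * z)) (Set.Icc 0 1) :=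
  continuousOn_const.sub <| continuousOn_const.mul <|
    (by fun_prop : Continuous fun t : ℝ => 1 - (t : ℂ) * z).continuousOn.clog fun t ht =>
      Complex.one_sub_mem_slitPlane_of_norm_lt_one (norm_ofReal_mul_lt_one hz ht)

lemma fM_eq_mul_integral (hz : ‖z‖ < 1) :
    fM M z = z * ∫ t in (0 : ℝ)..1, (1 - 2 * M * Complex.log (1 - t * z)) := by
  have h := sub_eq_mul_integral_deriv_segment (f := fM M)
    (f' := fun w => 1 - 2 * M * Complex.log (1 - w))
    (fun t ht => hasDerivAt_fM (norm_ofReal_mul_lt_one hz ht))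
    (continuousOn_one_sub_mul_log_one_sub_ofReal_mul M hz)
  rwa [fM_zero, sub_zero] at h

lemma re_integral_one_sub_mul_log (hz : ‖z‖ < 1) :
    (∫ t in (0 : ℝ)..1, (1 - 2 * M * Complex.log (1 - t * z))).re
      = ∫ t in (0 : ℝ)..1, (1 - 2 * M * Real.log ‖1 - t * z‖) := by
  have h := Complex.reCLM.intervalIntegral_comp_comm <|
    (continuousOn_one_sub_mul_log_one_sub_ofReal_mul M hz).intervalIntegrable_of_Icc
      (μ := volume) zero_le_one
  simp only [Complex.reCLM_apply] at h
  rw [← h]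
  simp [Complex.log_re]

variable (M) in
lemma intervalIntegrable_one_sub_mul_log_norm (hz : ‖z‖ < 1) :
    IntervalIntegrable (fun t : ℝ => 1 - 2 * M * Real.log ‖1 - t * z‖) volume 0 1 := by
  have h := (Complex.continuous_re.comp_continuousOn
    (continuousOn_one_sub_mul_log_one_sub_ofReal_mul M hz)).intervalIntegrable_of_Icc
      (μ := volume) zero_le_one
  simpa [Function.comp_def, Complex.log_re] using h

noncomputable def fMMinModulus (M r : ℝ) : ℝ :=
  (1 + 2 * M) * r - 2 * M * ((1 + r) * Real.log (1 + r))

lemma fM_neg_ofReal {r : ℝ} (hr : 0 ≤ r) (hr1 : r < 1) :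
    fM M (-r) = -fMMinModulus M r := by
  have hlog : Complex.log (1 - -r) = Real.log (1 + r) := by
    rw [Complex.ofReal_log (by linarith), Complex.ofReal_add, Complex.ofReal_one, sub_neg_eq_add]
  rw [fM_eq (by simpa [abs_of_nonneg hr]), hlog, fMMinModulus]
  push_cast
  ring

lemma fMMinModulus_le_norm_fM (hM : 0 ≤ M) (hz : ‖z‖ < 1) :
    fMMinModulus M ‖z‖ ≤ ‖fM M z‖ := by
  set r := ‖z‖
  have hr : ‖-(r : ℂ)‖ < 1 := by simpa [r]
  have hradial : fMMinModulus M r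
      = r * ∫ t in (0 : ℝ)..1, (1 - 2 * M * Real.log ‖1 - t * -(r : ℂ)‖) := by
    have h := congrArg Complex.re (fM_eq_mul_integral (M := M) hr)
    rw [fM_neg_ofReal (norm_nonneg z) hz, neg_mul, Complex.neg_re, Complex.neg_re,
      Complex.re_ofReal_mul, re_integral_one_sub_mul_log hr, Complex.ofReal_re] at h
    linarith
  have hmono : ∫ t in (0 : ℝ)..1, (1 - 2 * M * Real.log ‖1 - t * -(r : ℂ)‖)
      ≤ ∫ t in (0 : ℝ)..1, (1 - 2 * M * Real.log ‖1 - t * z‖) := by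
    refine intervalIntegral.integral_mono_on zero_le_one
      (intervalIntegrable_one_sub_mul_log_norm M hr)
      (intervalIntegrable_one_sub_mul_log_norm M hz) fun t ht => ?_
    have hpos : 0 < ‖1 - t * z‖ := norm_pos_iff.mpr <| Complex.slitPlane_ne_zero <|
      Complex.one_sub_mem_slitPlane_of_norm_lt_one (norm_ofReal_mul_lt_one hz ht)
    have := Real.log_le_log hpos (norm_one_sub_ofReal_mul_le ht.1 z)
    nlinarith
  calc fMMinModulus M r ≤ r * ∫ t in (0 : ℝ)..1, (1 - 2 * M * Real.log ‖1 - t * z‖) := by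
        rw [hradial]; exact mul_le_mul_of_nonneg_left hmono (norm_nonneg z)
    _ = r * (∫ t in (0 : ℝ)..1, (1 - 2 * M * Complex.log (1 - t * z))).re := by
        rw [re_integral_one_sub_mul_log hz]
    _ ≤ r * ‖∫ t in (0 : ℝ)..1, (1 - 2 * M * Complex.log (1 - t * z))‖ :=
        mul_le_mul_of_nonneg_left (Complex.re_le_norm _) (norm_nonneg z)
    _ = ‖fM M z‖ := by rw [fM_eq_mul_integral hz, norm_mul]

variable (M) in
lemma tendsto_fMMinModulus :
    Tendsto (fMMinModulus M) (𝓝[<] 1) (𝓝 (1 + 2 * M * (1 - 2 * Real.log 2))) := by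
  have hcont : ContinuousAt (fMMinModulus M) 1 := by
    unfold fMMinModulus
    fun_prop (disch := norm_num)
  convert hcont.tendsto.mono_left nhdsWithin_le_nhds using 2
  norm_num [fMMinModulus]
  ring

lemma bdyDist_fM (hM : 0 ≤ M) (hd : 0 ≤ 1 + 2 * M * (1 - 2 * Real.log 2)) :
    bdyDist (fM M) = 1 + 2 * M * (1 - 2 * Real.log 2) := by
  have hIoo : ∀ᶠ r in 𝓝[<] (1 : ℝ), r ∈ Set.Ioo 0 1 := Ioo_mem_nhdsLT one_pos
  refine liminf_eq_of_eventually_ge_of_tendsto_comp (l' := 𝓝[<] (1 : ℝ))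
    (v := fMMinModulus M ∘ norm) (φ := fun r : ℝ => -(r : ℂ)) ?_
    ((tendsto_fMMinModulus M).comp tendsto_comap) ?_ ?_
  · filter_upwards [preimage_mem_comap self_mem_nhdsWithin] with z hz
    simpa [fM_zero] using fMMinModulus_le_norm_fM hM hz
  · refine tendsto_comap_iff.mpr (tendsto_id.congr' ?_)
    filter_upwards [hIoo] with r hr
    simp [abs_of_pos hr.1]
  · rw [← abs_of_nonneg hd]
    refine (tendsto_fMMinModulus M).abs.congr' ?_
    filter_upwards [hIoo] with r hr
    simp [fM_zero, fM_neg_ofReal hr.1.le hr.2]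

end ExtremalFunction

/-- Sharpness of Theorem 3.3: equality for the extremal function `f_M`. -/
theorem improved_bohr_coeff_sharp (M : ℝ) (hM : 0 < M)
    (r₀ : ℝ) (hr₀ : r₀ ∈ Set.Ioo (0 : ℝ) 1)
    (hroot : r₀ - 1 + 2 * M * (2 * M + 1) * (r₀ + (1 - r₀) * Real.log (1 - r₀))
      - 2 * M * (1 - 2 * Real.log 2) = 0) :
    (r₀ + ∑' n : ℕ, (2 * M / (((n : ℝ) + 2) * ((n : ℝ) + 1))
          + ((n : ℝ) + 2) * ((n : ℝ) + 1)
            * (2 * M / (((n : ℝ) + 2) * ((n : ℝ) + 1))) ^ 2) * r₀ ^ (n + 2)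
      = 1 + 2 * M * (1 - 2 * Real.log 2)) ∧
    bdyDist (fM M) = 1 + 2 * M * (1 - 2 * Real.log 2) := by
  obtain ⟨hr0, hr1⟩ := hr₀
  have hsum := Real.hasSum_one_sub_mul_log_one_sub (abs_lt.mpr ⟨by linarith, hr1⟩)
  have hd : 1 + 2 * M * (1 - 2 * Real.log 2)
      = r₀ + 2 * M * (2 * M + 1) * (r₀ + (1 - r₀) * Real.log (1 - r₀)) := by linarith
  have hcoeff (n : ℕ) : (2 * M / (((n : ℝ) + 2) * ((n : ℝ) + 1))
      + ((n : ℝ) + 2) * ((n : ℝ) + 1) * (2 * M / (((n : ℝ) + 2) * ((n : ℝ) + 1))) ^ 2)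
        * r₀ ^ (n + 2)
      = 2 * M * (2 * M + 1) * (r₀ ^ (n + 2) / (((n : ℝ) + 2) * ((n : ℝ) + 1))) := by
    field_simp
    ring
  refine ⟨by rw [hd, tsum_congr hcoeff, (hsum.mul_left _).tsum_eq], bdyDist_fM hM.le ?_⟩
  rw [hd]
  have := hsum.nonneg fun n => by positivity
  positivity
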